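/- Let D- be a canonical negative Boolean automaton double-cycle where both cycles have odd sizes n > 1 and m > 1. Then the configuration ((01)^{(n-1)/2}0, (01)^{(m-1)/2}0) is irreversible: once any effective asynchronous update is applied to it, it can never be reached again. -/

import Mathlib

/-- A configuration of a Boolean automaton double-cycle with cycles of sizes `n`
and `m`: the shared automaton `c` is index 0 of both cycles (so valid
configurations satisfy `x.1 0 = x.2 0`). -/
abbrev Cfg (n m : ℕ) := (Fin n → Bool) × (Fin m → Bool)

/-- One asynchronous single-automaton update in a double-cycle whose shared
automaton `c` computes `fc`; every non-shared automaton copies its predecessor. -/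
inductive Step {n m : ℕ} (fc : Cfg n m → Bool) : Cfg n m → Cfg n m → Prop
  | left (x : Cfg n m) (i : Fin n) (hi : 1 ≤ i.val) :
      Step fc x (Function.update x.1 i (x.1 ⟨i.val - 1, by have := i.isLt; omega⟩), x.2)
  | right (x : Cfg n m) (j : Fin m) (hj : 1 ≤ j.val) :
      Step fc x (x.1, Function.update x.2 j (x.2 ⟨j.val - 1, by have := j.isLt; omega⟩))
  | center (x : Cfg n m) (i : Fin n) (j : Fin m) (hi : i.val = 0) (hj : j.val = 0) :
      Step fc x (Function.update x.1 i (fc x), Function.update x.2 j (fc x))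

/-- `Steps fc k x y`: configuration `y` is obtained from `x` by exactly `k`
asynchronous single-automaton updates. -/
def Steps {n m : ℕ} (fc : Cfg n m → Bool) : ℕ → Cfg n m → Cfg n m → Prop
  | 0, x, y => x = y
  | k + 1, x, y => ∃ z, Step fc x z ∧ Steps fc k z y

/-!
The alternating configuration `s` is a garden of Eden: it has no predecessor, so the only
configuration from which it is reachable is `s` itself. A step of a non-shared automaton
makes it equal to its predecessor, which never happens in an alternating word. A step of
the shared automaton leaves the last automata of both cycles at `0` (both cycles have odd
length), so the negative function `c` then computes `1`, whereas `s` has `c = 0`.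
-/

variable {n m : ℕ}

def alternating (k : ℕ) : Fin k → Bool := fun i => decide (i.val % 2 = 1)

theorem alternating_ne_pred {k : ℕ} (i : Fin k) (hi : 1 ≤ i.val) :
    alternating k i ≠ alternating k ⟨i.val - 1, by omega⟩ := by
  simp only [alternating, ne_eq, decide_eq_decide]
  omega

theorem alternating_last {k : ℕ} (hk : k % 2 = 1) :
    alternating k ⟨k - 1, by omega⟩ = false := by
  simp only [alternating, decide_eq_false_iff_not]
  omega

theorem Step.target_cases {fc : Cfg n m → Bool} {z y : Cfg n m} (h : Step fc z y) :
    (∃ (i : Fin n) (hi : 1 ≤ i.val), y.1 i = y.1 ⟨i.val - 1, by omega⟩) ∨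
    (∃ (j : Fin m) (hj : 1 ≤ j.val), y.2 j = y.2 ⟨j.val - 1, by omega⟩) ∨
    ((∀ i : Fin n, i.val ≠ 0 → y.1 i = z.1 i) ∧ (∀ j : Fin m, j.val ≠ 0 → y.2 j = z.2 j) ∧
      ∃ i : Fin n, i.val = 0 ∧ y.1 i = fc z) := by
  cases h with
  | left i hi =>
    refine .inl ⟨i, hi, ?_⟩
    dsimp only
    rw [Function.update_self, Function.update_of_ne (Fin.ne_of_val_ne (by simp; omega))]
  | right j hj =>
    refine .inr (.inl ⟨j, hj, ?_⟩)
    dsimp only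
    rw [Function.update_self, Function.update_of_ne (Fin.ne_of_val_ne (by simp; omega))]
  | center i j hi hj =>
    refine .inr (.inr ⟨fun i' hi' => ?_, fun j' hj' => ?_, i, hi, Function.update_self ..⟩)
    · exact Function.update_of_ne (Fin.ne_of_val_ne (by omega)) ..
    · exact Function.update_of_ne (Fin.ne_of_val_ne (by omega)) ..

theorem not_step_alternating (hn : 1 < n) (hm : 1 < m) (hnodd : n % 2 = 1) (hmodd : m % 2 = 1)
    (z : Cfg n m) :
    ¬ Step (fun z : Cfg n m =>
        !(z.1 ⟨n - 1, Nat.sub_one_lt_of_lt hn⟩) && !(z.2 ⟨m - 1, Nat.sub_one_lt_of_lt hm⟩))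
      z (alternating n, alternating m) := by
  intro h
  rcases h.target_cases with ⟨i, hi, heq⟩ | ⟨j, hj, heq⟩ | ⟨hfst, hsnd, i, hi, hc⟩
  · exact alternating_ne_pred i hi heq
  · exact alternating_ne_pred j hj heq
  · have hz₁ : z.1 ⟨n - 1, Nat.sub_one_lt_of_lt hn⟩ = false := by
      rw [← hfst _ (by simp; omega)]
      exact alternating_last hnodd
    have hz₂ : z.2 ⟨m - 1, Nat.sub_one_lt_of_lt hm⟩ = false := by
      rw [← hsnd _ (by simp; omega)]
      exact alternating_last hmodd
    rw [hz₁, hz₂] at hc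
    simp [alternating, hi] at hc

theorem stmt16 (n m : ℕ) (hn : 1 < n) (hm : 1 < m)
    (hnodd : n % 2 = 1) (hmodd : m % 2 = 1) :
    ∀ x' : Cfg n m,
      Step (fun z : Cfg n m => !(z.1 ⟨n - 1, by omega⟩) && !(z.2 ⟨m - 1, by omega⟩))
        ((fun i => decide (i.val % 2 = 1), fun i => decide (i.val % 2 = 1)) : Cfg n m) x' →
      x' ≠ ((fun i => decide (i.val % 2 = 1), fun i => decide (i.val % 2 = 1)) : Cfg n m) →
      ¬ Relation.ReflTransGen
          (Step (fun z : Cfg n m => !(z.1 ⟨n - 1, by omega⟩) && !(z.2 ⟨m - 1, by omega⟩)))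
          x'
          ((fun i => decide (i.val % 2 = 1), fun i => decide (i.val % 2 = 1)) : Cfg n m) := by
  intro x' _ hne hreach
  exact hne ((Relation.reflTransGen_iff_eq (not_step_alternating hn hm hnodd hmodd)).1
    (Relation.reflTransGen_swap.2 hreach))
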